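/- arXiv:2301.02347 — 7 statements merged into one kernel-verified Lean document; each statement's English description precedes it below -/
import Mathlib

section
/- Let f : ℝⁿ → ℝ be differentiable with gradient ∇f Lipschitz continuous with constant L ≥ 0, and let h : ℝⁿ → ℝ ∪ {+∞} be proper, lower semicontinuous, and bounded below. Let x ∈ ℝⁿ with h(x) < +∞, let ν > 0 satisfy νL < 1, and let x⁺ be a global minimizer over u ∈ ℝⁿ of (1/2)‖u − (x − ν∇f(x))‖₂² + ν h(u). Then f(x⁺) + h(x⁺) ≤ f(x) + h(x) − (1/2)(ν⁻¹ − L)‖x⁺ − x‖₂². -/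
/-!
Lipschitz continuity of `∇f` gives the quadratic upper bound
`f x⁺ ≤ f x + ⟪∇f x, x⁺ - x⟫ + L/2 ‖x⁺ - x‖²`, and comparing the prox objective at `x⁺` with its
value at `u = x` gives `h x⁺ ≤ h x - ⟪∇f x, x⁺ - x⟫ - (2ν)⁻¹ ‖x⁺ - x‖²`. Adding the two, the inner
products cancel.
-/

open InnerProductSpace

theorem le_add_fderiv_add_sq_of_lipschitz_fderiv {E : Type*} [NormedAddCommGroup E]
    [NormedSpace ℝ E] {f : E → ℝ} {f' : E → StrongDual ℝ E} {L : ℝ}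
    (hf : ∀ y, HasFDerivAt f (f' y) y) (hlip : ∀ y z, ‖f' y - f' z‖ ≤ L * ‖y - z‖) (x d : E) :
    f (x + d) ≤ f x + f' x d + L / 2 * ‖d‖ ^ 2 := by
  set φ : ℝ → ℝ := fun t ↦ f (x + t • d) - t * f' x d - L / 2 * t ^ 2 * ‖d‖ ^ 2
  set φ' : ℝ → ℝ := fun t ↦ (f' (x + t • d) - f' x) d - L * t * ‖d‖ ^ 2
  have hφ : ∀ t, HasDerivAt φ (φ' t) t := by
    intro t
    have hline : HasDerivAt (fun t : ℝ ↦ x + t • d) d t := by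
      simpa using ((hasDerivAt_id t).smul_const d).const_add x
    refine ((((hf _).comp_hasDerivAt t hline).sub ((hasDerivAt_id t).mul_const (f' x d))).sub
      (((hasDerivAt_pow 2 t).const_mul (L / 2)).mul_const (‖d‖ ^ 2))).congr_deriv ?_
    simp only [φ', sub_apply]
    ring
  have hφ'_nonpos : ∀ t, 0 ≤ t → φ' t ≤ 0 := by
    intro t ht
    rw [sub_nonpos]
    have hstep : ‖f' (x + t • d) - f' x‖ ≤ L * (t * ‖d‖) := by
      simpa [norm_smul, abs_of_nonneg ht] using hlip (x + t • d) x
    calc (f' (x + t • d) - f' x) d ≤ ‖f' (x + t • d) - f' x‖ * ‖d‖ :=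
          (le_abs_self _).trans ((f' (x + t • d) - f' x).le_opNorm d)
      _ ≤ L * (t * ‖d‖) * ‖d‖ := by gcongr
      _ = L * t * ‖d‖ ^ 2 := by ring
  have hanti : AntitoneOn φ (Set.Ici 0) :=
    antitoneOn_of_hasDerivWithinAt_nonpos (convex_Ici 0)
      (fun t _ ↦ (hφ t).continuousAt.continuousWithinAt)
      (fun t _ ↦ (hφ t).hasDerivWithinAt)
      (fun t ht ↦ hφ'_nonpos t (interior_subset ht))
  have hφ10 := hanti Set.self_mem_Ici (Set.mem_Ici.2 zero_le_one) zero_le_one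
  simp only [φ, zero_smul, one_smul, add_zero] at hφ10
  linarith

theorem le_add_inner_add_sq_of_lipschitz_gradient {F : Type*} [NormedAddCommGroup F]
    [InnerProductSpace ℝ F] [CompleteSpace F] {f : F → ℝ} {f' : F → F} {L : ℝ}
    (hf : ∀ y, HasGradientAt f (f' y) y) (hlip : ∀ y z, ‖f' y - f' z‖ ≤ L * ‖y - z‖) (x d : F) :
    f (x + d) ≤ f x + ⟪f' x, d⟫_ℝ + L / 2 * ‖d‖ ^ 2 := by
  simpa using le_add_fderiv_add_sq_of_lipschitz_fderiv (fun y ↦ (hf y).hasFDerivAt)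
    (fun y z ↦ by simpa [← map_sub] using hlip y z) x d

theorem le_sub_inner_sub_of_prox_le {F : Type*} [NormedAddCommGroup F] [InnerProductSpace ℝ F]
    {ν a b : ℝ} (hν : 0 < ν) {x xp g : F}
    (hmin : 1 / 2 * ‖xp - (x - ν • g)‖ ^ 2 + ν * b ≤ 1 / 2 * ‖x - (x - ν • g)‖ ^ 2 + ν * a) :
    b ≤ a - ⟪g, xp - x⟫_ℝ - (2 * ν)⁻¹ * ‖xp - x‖ ^ 2 := by
  have hexpand : ‖xp - (x - ν • g)‖ ^ 2
      = ‖xp - x‖ ^ 2 + 2 * ν * ⟪g, xp - x⟫_ℝ + ‖x - (x - ν • g)‖ ^ 2 := by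
    rw [show xp - (x - ν • g) = (xp - x) + ν • g by abel, sub_sub_cancel, norm_add_sq_real,
      real_inner_smul_right, real_inner_comm]
    ring
  have hν2 : ν * (2 * ν)⁻¹ = 1 / 2 := by field_simp
  refine le_of_mul_le_mul_left ?_ hν
  linear_combination hmin - 1 / 2 * hexpand + ‖xp - x‖ ^ 2 * hν2

theorem EReal.ne_top_of_coe_add_mul_le_coe_add_mul {c d ν a : ℝ} (hν : 0 < ν) {y : EReal}
    (hle : (c : EReal) + ν * y ≤ d + ν * a) : y ≠ ⊤ := by
  rintro rfl
  rw [EReal.mul_top_of_pos (by exact_mod_cast hν), EReal.coe_add_top, top_le_iff] at hle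
  exact EReal.coe_ne_top (d + ν * a) (by exact_mod_cast hle)

theorem prox_gradient_descent_general {n : ℕ}
    (f : EuclideanSpace ℝ (Fin n) → ℝ)
    (f' : EuclideanSpace ℝ (Fin n) → EuclideanSpace ℝ (Fin n))
    (hf : ∀ y, HasGradientAt f (f' y) y)
    (L : ℝ)
    (hlip : ∀ y z, ‖f' y - f' z‖ ≤ L * ‖y - z‖)
    (h : EuclideanSpace ℝ (Fin n) → EReal)
    (hnobot : ∀ u, h u ≠ ⊥)
    (x : EuclideanSpace ℝ (Fin n)) (hx : h x < ⊤)
    (ν : ℝ) (hν : 0 < ν)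
    (xp : EuclideanSpace ℝ (Fin n))
    (hxp : ∀ u, (((1 / 2) * ‖xp - (x - ν • f' x)‖ ^ 2 : ℝ) : EReal) + (ν : EReal) * h xp
        ≤ (((1 / 2) * ‖u - (x - ν • f' x)‖ ^ 2 : ℝ) : EReal) + (ν : EReal) * h u) :
    (f xp : EReal) + h xp
      ≤ (f x : EReal) + h x - (((1 / 2) * (ν⁻¹ - L) * ‖xp - x‖ ^ 2 : ℝ) : EReal) := by
  obtain ⟨a, ha⟩ : ∃ a : ℝ, h x = a := ⟨_, (EReal.coe_toReal hx.ne (hnobot x)).symm⟩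
  have hmin := hxp x
  rw [ha] at hmin ⊢
  obtain ⟨b, hb⟩ : ∃ b : ℝ, h xp = b :=
    ⟨_, (EReal.coe_toReal (EReal.ne_top_of_coe_add_mul_le_coe_add_mul hν hmin) (hnobot xp)).symm⟩
  rw [hb] at hmin ⊢
  norm_cast at hmin
  have hprox := le_sub_inner_sub_of_prox_le hν hmin
  have hdesc := le_add_inner_add_sq_of_lipschitz_gradient hf hlip x (xp - x)
  rw [add_sub_cancel] at hdesc
  have hreal : f xp + b ≤ f x + a - 1 / 2 * (ν⁻¹ - L) * ‖xp - x‖ ^ 2 := by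
    linear_combination hdesc + hprox
  exact_mod_cast hreal

/-- Descent property of one proximal gradient step (Lemma 2.3 / Bolte-Sabach-Teboulle). -/
theorem prox_gradient_descent {n : ℕ}
    (f : EuclideanSpace ℝ (Fin n) → ℝ)
    (f' : EuclideanSpace ℝ (Fin n) → EuclideanSpace ℝ (Fin n))
    (hf : ∀ y, HasGradientAt f (f' y) y)
    (L : ℝ) (hL : 0 ≤ L)
    (hlip : ∀ y z, ‖f' y - f' z‖ ≤ L * ‖y - z‖)
    (h : EuclideanSpace ℝ (Fin n) → EReal)
    (hproper : ∃ u, h u ≠ ⊤)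
    (hnobot : ∀ u, h u ≠ ⊥)
    (hlsc : LowerSemicontinuous h)
    (hbdd : ∃ c : ℝ, ∀ u, (c : EReal) ≤ h u)
    (x : EuclideanSpace ℝ (Fin n)) (hx : h x < ⊤)
    (ν : ℝ) (hν : 0 < ν) (hνL : ν * L < 1)
    (xp : EuclideanSpace ℝ (Fin n))
    (hxp : ∀ u, (((1 / 2) * ‖xp - (x - ν • f' x)‖ ^ 2 : ℝ) : EReal) + (ν : EReal) * h xp
        ≤ (((1 / 2) * ‖u - (x - ν • f' x)‖ ^ 2 : ℝ) : EReal) + (ν : EReal) * h u) :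
    (f xp : EReal) + h xp
      ≤ (f x : EReal) + h x - (((1 / 2) * (ν⁻¹ - L) * ‖xp - x‖ ^ 2 : ℝ) : EReal) :=
  prox_gradient_descent_general f f' hf L hlip h hnobot x hx ν hν xp hxp
end

section
/- Fix x ∈ ℝⁿ with h(x) < +∞, let η₂ ∈ (0, 1) and κ_m > 0, and suppose |(f(x+s) + h(x+s)) − (φ(s; x) + ψ(s; x))| ≤ κ_m ‖s‖₂² for all s ∈ ℝⁿ. Let s ∈ ℝⁿ with s ≠ 0 and ψ(s; x) < +∞ satisfy m(s; x, σ) ≤ m(0; x, σ), where σ ≥ 2κ_m/(1 − η₂). Then the model decrease D := (φ(0; x) + ψ(0; x)) − (φ(s; x) + ψ(s; x)) satisfies D ≥ (σ/2)‖s‖₂² > 0, and the ratio ρ := ((f(x) + h(x)) − (f(x+s) + h(x+s)))/D satisfies ρ ≥ η₂. -/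
/-!
Since `J 0 = 0`, the model and the objective agree at the current point, so the adequacy bound at `s`
makes the actual decrease at least `D - κₘ‖s‖²`. The model decrease condition gives `D ≥ (σ/2)‖s‖²`,
and with `σ ≥ 2κₘ/(1 - η₂)` this yields `κₘ‖s‖² ≤ (1 - η₂) D`; hence the actual decrease is at
least `η₂ D`.
-/

theorem EReal.ne_top_of_coe_add_le_add_coe {a c : ℝ} {y z : EReal}
    (h : (a : EReal) + y ≤ z + c) (hz : z ≠ ⊤) : y ≠ ⊤ := by
  rintro rfl
  rw [EReal.coe_add_top] at h
  exact (h.trans_lt (EReal.add_lt_top hz (EReal.coe_ne_top c))).false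

theorem le_div_of_sub_mul_le {η κ σ q pred ared : ℝ} (hη : η < 1) (hσ : 2 * κ / (1 - η) ≤ σ)
    (hq : 0 ≤ q) (hpred : σ / 2 * q ≤ pred) (hpos : 0 < pred) (herr : pred - κ * q ≤ ared) :
    η ≤ ared / pred := by
  have hκσ : 2 * κ ≤ (1 - η) * σ := by
    rw [div_le_iff₀ (by linarith)] at hσ
    linarith
  have hκ : κ * q ≤ (1 - η) * pred :=
    calc κ * q ≤ (1 - η) * σ / 2 * q := by gcongr; linarith
      _ = (1 - η) * (σ / 2 * q) := by ring
      _ ≤ (1 - η) * pred := by gcongr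
  rw [le_div_iff₀ hpos]
  linarith

theorem very_successful_iteration_general {n m : ℕ}
    (F : EuclideanSpace ℝ (Fin n) → EuclideanSpace ℝ (Fin m))
    (J : EuclideanSpace ℝ (Fin n) →L[ℝ] EuclideanSpace ℝ (Fin m))
    (x : EuclideanSpace ℝ (Fin n))
    (f : EuclideanSpace ℝ (Fin n) → ℝ)
    (hf : f = fun y => (1 / 2) * ‖F y‖ ^ 2)
    (h : EuclideanSpace ℝ (Fin n) → EReal)
    (hnobot : ∀ u, h u ≠ ⊥)
    (ψ : EuclideanSpace ℝ (Fin n) → EReal)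
    (hψnobot : ∀ t, ψ t ≠ ⊥)
    (hψ0 : ψ 0 = h x)
    (hx : h x < ⊤)
    (η₂ : ℝ) (hη₂ : η₂ ∈ Set.Ioo (0 : ℝ) 1)
    (κm : ℝ) (hκm : 0 < κm)
    (φ : EuclideanSpace ℝ (Fin n) → ℝ)
    (hφ : φ = fun t => (1 / 2) * ‖J t + F x‖ ^ 2)
    -- model adequacy: |(f(x+t)+h(x+t)) - (φ(t)+ψ(t))| ≤ κₘ‖t‖² for all t
    (hadeq : ∀ t : EuclideanSpace ℝ (Fin n),
      (f (x + t) : EReal) + h (x + t) ≤ (φ t : EReal) + ψ t + ((κm * ‖t‖ ^ 2 : ℝ) : EReal) ∧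
      (φ t : EReal) + ψ t ≤ (f (x + t) : EReal) + h (x + t) + ((κm * ‖t‖ ^ 2 : ℝ) : EReal))
    (σ : ℝ) (hσ : 2 * κm / (1 - η₂) ≤ σ)
    (s : EuclideanSpace ℝ (Fin n)) (hs0 : s ≠ 0) (hψs : ψ s < ⊤)
    (hdec : (φ s : EReal) + ((σ / 2) * ‖s‖ ^ 2 : ℝ) + ψ s
        ≤ (φ 0 : EReal) + ψ 0) :
    (((σ / 2) * ‖s‖ ^ 2 : ℝ) : EReal) ≤ (φ 0 : EReal) + ψ 0 - ((φ s : EReal) + ψ s) ∧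
    (0 : EReal) < (φ 0 : EReal) + ψ 0 - ((φ s : EReal) + ψ s) ∧
    (η₂ : EReal) ≤
      ((f x : EReal) + h x - ((f (x + s) : EReal) + h (x + s))) /
        ((φ 0 : EReal) + ψ 0 - ((φ s : EReal) + ψ s)) := by
  have hφ0 : φ 0 = f x := by simp [hφ, hf]
  have hq : 0 < ‖s‖ ^ 2 := by positivity
  have hσ0 : 0 < σ := (div_pos (by linarith) (by linarith [hη₂.2])).trans_le hσ
  have had := (hadeq s).1
  have hxs : h (x + s) ≠ ⊤ :=
    EReal.ne_top_of_coe_add_le_add_coe had (EReal.add_ne_top (EReal.coe_ne_top _) hψs.ne)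
  lift h x to ℝ using ⟨hx.ne, hnobot x⟩ with A
  lift ψ s to ℝ using ⟨hψs.ne, hψnobot s⟩ with B
  lift h (x + s) to ℝ using ⟨hxs, hnobot (x + s)⟩ with H
  rw [hψ0] at hdec ⊢
  norm_cast at hdec had ⊢
  rw [← EReal.coe_div, EReal.coe_le_coe_iff]
  have hD : σ / 2 * ‖s‖ ^ 2 ≤ φ 0 + A - (φ s + B) := by linarith
  have hDpos := (by positivity : 0 < σ / 2 * ‖s‖ ^ 2).trans_le hD
  exact ⟨hD, hDpos, le_div_of_sub_mul_le hη₂.2 hσ hq.le hD hDpos (by linarith)⟩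

/-- Key estimate of Theorem 4.1: if σ ≥ 2κₘ/(1-η₂) and the step decreases the model,
then the model decrease is at least (σ/2)‖s‖² > 0 and the ratio ρ is at least η₂. -/
theorem very_successful_iteration {n m : ℕ}
    (F : EuclideanSpace ℝ (Fin n) → EuclideanSpace ℝ (Fin m))
    (J : EuclideanSpace ℝ (Fin n) →L[ℝ] EuclideanSpace ℝ (Fin m))
    (x : EuclideanSpace ℝ (Fin n))
    (hF : ContDiff ℝ 1 F) (hJ : HasFDerivAt F J x)
    (f : EuclideanSpace ℝ (Fin n) → ℝ)
    (hf : f = fun y => (1 / 2) * ‖F y‖ ^ 2)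
    (h : EuclideanSpace ℝ (Fin n) → EReal)
    (hproper : ∃ u, h u ≠ ⊤) (hnobot : ∀ u, h u ≠ ⊥) (hlsc : LowerSemicontinuous h)
    (ψ : EuclideanSpace ℝ (Fin n) → EReal)
    (hψproper : ∃ t, ψ t ≠ ⊤) (hψnobot : ∀ t, ψ t ≠ ⊥) (hψlsc : LowerSemicontinuous ψ)
    (hψ0 : ψ 0 = h x)
    (hx : h x < ⊤)
    (η₂ : ℝ) (hη₂ : η₂ ∈ Set.Ioo (0 : ℝ) 1)
    (κm : ℝ) (hκm : 0 < κm)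
    (φ : EuclideanSpace ℝ (Fin n) → ℝ)
    (hφ : φ = fun t => (1 / 2) * ‖J t + F x‖ ^ 2)
    -- model adequacy: |(f(x+t)+h(x+t)) - (φ(t)+ψ(t))| ≤ κₘ‖t‖² for all t
    (hadeq : ∀ t : EuclideanSpace ℝ (Fin n),
      (f (x + t) : EReal) + h (x + t) ≤ (φ t : EReal) + ψ t + ((κm * ‖t‖ ^ 2 : ℝ) : EReal) ∧
      (φ t : EReal) + ψ t ≤ (f (x + t) : EReal) + h (x + t) + ((κm * ‖t‖ ^ 2 : ℝ) : EReal))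
    (σ : ℝ) (hσ : 2 * κm / (1 - η₂) ≤ σ)
    (s : EuclideanSpace ℝ (Fin n)) (hs0 : s ≠ 0) (hψs : ψ s < ⊤)
    (hdec : (φ s : EReal) + ((σ / 2) * ‖s‖ ^ 2 : ℝ) + ψ s
        ≤ (φ 0 : EReal) + ψ 0) :
    (((σ / 2) * ‖s‖ ^ 2 : ℝ) : EReal) ≤ (φ 0 : EReal) + ψ 0 - ((φ s : EReal) + ψ s) ∧
    (0 : EReal) < (φ 0 : EReal) + ψ 0 - ((φ s : EReal) + ψ s) ∧
    (η₂ : EReal) ≤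
      ((f x : EReal) + h x - ((f (x + s) : EReal) + h (x + s))) /
        ((φ 0 : EReal) + ψ 0 - ((φ s : EReal) + ψ s)) :=
  very_successful_iteration_general F J x f hf h hnobot ψ hψnobot hψ0 hx η₂ hη₂ κm hκm φ hφ hadeq σ
    hσ s hs0 hψs hdec
end

section
/- Let K ∈ ℕ, let σ : {0, 1, …, K} → ℝ with σ_k > 0 for all k and σ₀ ≤ σ_max, let γ₁ > 1 and 0 < γ₃ ≤ 1, and let the index set {0, 1, …, K−1} be partitioned into disjoint sets S and U such that σ_{k+1} ≥ γ₃ σ_k for k ∈ S and σ_{k+1} ≥ γ₁ σ_k for k ∈ U. If σ_k ≤ σ_max for all 0 ≤ k ≤ K, then |U| log(γ₁) + |S| log(γ₃) ≤ log(σ_max/σ₀), and consequently |U| ≤ log(σ_max/σ₀)/log(γ₁) + |S| · |log(γ₃)|/log(γ₁). -/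
/-- Lemma 4.5: bound on the number of unsuccessful iterations. -/
theorem unsuccessful_iterations_bound (K : ℕ) (σ : ℕ → ℝ) (σmax : ℝ)
    (hpos : ∀ k ≤ K, 0 < σ k) (hmax : ∀ k ≤ K, σ k ≤ σmax)
    (γ₁ γ₃ : ℝ) (hγ₁ : 1 < γ₁) (hγ₃0 : 0 < γ₃) (hγ₃1 : γ₃ ≤ 1)
    (S U : Finset ℕ) (hSU : S ∪ U = Finset.range K) (hdisj : Disjoint S U)
    (hS : ∀ k ∈ S, γ₃ * σ k ≤ σ (k + 1))
    (hU : ∀ k ∈ U, γ₁ * σ k ≤ σ (k + 1)) :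
    (U.card : ℝ) * Real.log γ₁ + (S.card : ℝ) * Real.log γ₃ ≤ Real.log (σmax / σ 0) ∧
    (U.card : ℝ) ≤ Real.log (σmax / σ 0) / Real.log γ₁
      + (S.card : ℝ) * |Real.log γ₃| / Real.log γ₁ := by
  have hγ₁0 : (0:ℝ) < γ₁ := lt_trans one_pos hγ₁
  have key : ∀ k, k ≤ K →
      γ₁ ^ (U ∩ Finset.range k).card * (γ₃ ^ (S ∩ Finset.range k).card * σ 0) ≤ σ k := by
    intro k
    induction k with
    | zero => intro _; simp
    | succ k ih =>
      intro hk1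
      have hkK : k < K := hk1
      have ihv := ih (le_of_lt hkK)
      have hkmem : k ∈ S ∪ U := by
        rw [hSU]; exact Finset.mem_range.mpr hkK
      have hins : Finset.range (k+1) = insert k (Finset.range k) :=
        Finset.range_add_one
      have hknotin : k ∉ Finset.range k := by simp
      rcases Finset.mem_union.mp hkmem with hkS | hkU
      · have hkU' : k ∉ U := fun h => (Finset.disjoint_left.mp hdisj hkS) h
        have hUcard : (U ∩ Finset.range (k+1)).card = (U ∩ Finset.range k).card := by
          rw [hins, Finset.inter_comm, Finset.insert_inter_of_notMem hkU', Finset.inter_comm]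
        have hScard : (S ∩ Finset.range (k+1)).card = (S ∩ Finset.range k).card + 1 := by
          rw [hins, Finset.inter_comm, Finset.insert_inter_of_mem hkS,
            Finset.card_insert_of_notMem (fun h => hknotin (Finset.mem_inter.mp h).1),
            Finset.inter_comm]
        rw [hUcard, hScard, pow_succ]
        calc γ₁ ^ (U ∩ Finset.range k).card *
              (γ₃ ^ (S ∩ Finset.range k).card * γ₃ * σ 0)
            = γ₃ * (γ₁ ^ (U ∩ Finset.range k).card *
              (γ₃ ^ (S ∩ Finset.range k).card * σ 0)) := by ring
          _ ≤ γ₃ * σ k := by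
              exact mul_le_mul_of_nonneg_left ihv (le_of_lt hγ₃0)
          _ ≤ σ (k+1) := hS k hkS
      · have hkS' : k ∉ S := fun h => (Finset.disjoint_left.mp hdisj h) hkU
        have hScard : (S ∩ Finset.range (k+1)).card = (S ∩ Finset.range k).card := by
          rw [hins, Finset.inter_comm, Finset.insert_inter_of_notMem hkS', Finset.inter_comm]
        have hUcard : (U ∩ Finset.range (k+1)).card = (U ∩ Finset.range k).card + 1 := by
          rw [hins, Finset.inter_comm, Finset.insert_inter_of_mem hkU,
            Finset.card_insert_of_notMem (fun h => hknotin (Finset.mem_inter.mp h).1),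
            Finset.inter_comm]
        rw [hUcard, hScard, pow_succ]
        calc γ₁ ^ (U ∩ Finset.range k).card * γ₁ *
              (γ₃ ^ (S ∩ Finset.range k).card * σ 0)
            = γ₁ * (γ₁ ^ (U ∩ Finset.range k).card *
              (γ₃ ^ (S ∩ Finset.range k).card * σ 0)) := by ring
          _ ≤ γ₁ * σ k := mul_le_mul_of_nonneg_left ihv (le_of_lt hγ₁0)
          _ ≤ σ (k+1) := hU k hkU
  have hUsub : U ⊆ Finset.range K := by rw [← hSU]; exact Finset.subset_union_right
  have hSsub : S ⊆ Finset.range K := by rw [← hSU]; exact Finset.subset_union_left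
  have hUint : U ∩ Finset.range K = U := Finset.inter_eq_left.mpr hUsub
  have hSint : S ∩ Finset.range K = S := Finset.inter_eq_left.mpr hSsub
  have keyK := key K le_rfl
  rw [hUint, hSint] at keyK
  have hσ0 : 0 < σ 0 := hpos 0 (Nat.zero_le K)
  have hσK : σ K ≤ σmax := hmax K le_rfl
  have hprod : γ₁ ^ U.card * (γ₃ ^ S.card * σ 0) ≤ σmax := le_trans keyK hσK
  have hprodpos : 0 < γ₁ ^ U.card * (γ₃ ^ S.card * σ 0) := by positivity
  have hlog := Real.log_le_log (by positivity) hprod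
  rw [Real.log_mul (by positivity) (by positivity),
      Real.log_mul (by positivity) (ne_of_gt hσ0),
      Real.log_pow, Real.log_pow] at hlog
  have h1 : (U.card : ℝ) * Real.log γ₁ + (S.card : ℝ) * Real.log γ₃ ≤
      Real.log (σmax / σ 0) := by
    have hσm : 0 < σmax := lt_of_lt_of_le hσ0 (hmax 0 (Nat.zero_le K))
    rw [Real.log_div (ne_of_gt hσm) (ne_of_gt hσ0)]
    linarith
  refine ⟨h1, ?_⟩
  have hlogγ₁ : 0 < Real.log γ₁ := Real.log_pos hγ₁
  have hlogγ₃ : Real.log γ₃ ≤ 0 := Real.log_nonpos (le_of_lt hγ₃0) hγ₃1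
  have habs : |Real.log γ₃| = -Real.log γ₃ := abs_of_nonpos hlogγ₃
  rw [habs, ← add_div, le_div_iff₀ hlogγ₁]
  linarith
end

section
/- Let Φ : ℝⁿ → ℝ ∪ {+∞} with Φ ≥ Φ_low everywhere, {x_k}_{0≤k≤K} a sequence with Φ(x₀) < +∞ and Φ(x_{k+1}) ≤ Φ(x_k) for all k < K, and σ : {0,…,K} → ℝ with σ_k > 0 and σ_k ≤ σ_max for all k. Let η₁, κ_mdc, ε ∈ (0, 1), γ₁ > 1, γ₃ ∈ (0, 1], and suppose {0,…,K−1} is partitioned into S and U such that Φ(x_k) − Φ(x_{k+1}) ≥ η₁ κ_mdc ε² and σ_{k+1} ≥ γ₃ σ_k for k ∈ S, while σ_{k+1} ≥ γ₁ σ_k for k ∈ U. Then K = |S| + |U| ≤ (1 + |log(γ₃)|/log(γ₁)) · (Φ(x₀) − Φ_low)/(η₁ κ_mdc ε²) + log(σ_max/σ₀)/log(γ₁); in particular K = O(ε⁻²). -/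
/-!
Telescope the objective over the first `K` iterations: every successful step lowers `Φ` by at
least `δ = η₁ κ_mdc ε²` and no step raises it, so `|S| δ ≤ Φ(x₀) - Φ_low`. Telescope `log σ_k`
as well: it grows by at least `log γ₁ > 0` on `U` and drops by at most `|log γ₃|` on `S`, and
stays below `log σ_max`, so `|U| log γ₁ ≤ |S| |log γ₃| + log (σ_max / σ₀)`. Adding the two
bounds on `|S|` and `|U|` gives the estimate on `K = |S| + |U|`.
-/

open Finset

theorem apply_le_apply_zero_of_forall_succ_le {α : Type*} [Preorder α] {f : ℕ → α} {K : ℕ}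
    (hf : ∀ k < K, f (k + 1) ≤ f k) : ∀ k ≤ K, f k ≤ f 0
  | 0, _ => le_rfl
  | k + 1, hk => (hf k hk).trans (apply_le_apply_zero_of_forall_succ_le hf k (by omega))

theorem EReal.le_toReal_sub_toReal {a b : EReal} {d : ℝ} (h : (d : EReal) ≤ a - b)
    (ha : a ≠ ⊤) (ha' : a ≠ ⊥) (hb : b ≠ ⊤) (hb' : b ≠ ⊥) : d ≤ a.toReal - b.toReal := by
  lift a to ℝ using ⟨ha, ha'⟩
  lift b to ℝ using ⟨hb, hb'⟩
  rw [← EReal.coe_sub, EReal.coe_le_coe_iff] at h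
  simpa using h

theorem Real.log_le_log_sub_log_of_mul_le {γ s t : ℝ} (hγ : 0 < γ) (hs : 0 < s)
    (h : γ * s ≤ t) : Real.log γ ≤ Real.log t - Real.log s := by
  have := Real.log_le_log (mul_pos hγ hs) h
  rw [Real.log_mul hγ.ne' hs.ne'] at this
  linarith

theorem add_le_one_add_abs_div_mul_div_add_div {s u δ D c L C : ℝ} (hs₀ : 0 ≤ s)
    (hδ : 0 < δ) (hL : 0 < L) (hs : s * δ ≤ D) (hsu : s * c + u * L ≤ C) :
    s + u ≤ (1 + |c| / L) * (D / δ) + C / L := by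
  have hsc : -(s * |c|) ≤ s * c := by
    rw [← mul_neg]; exact mul_le_mul_of_nonneg_left (neg_abs_le c) hs₀
  have hu : u ≤ s * (|c| / L) + C / L := by
    rw [mul_div_assoc', ← add_div, le_div_iff₀ hL]; linarith
  have hs' : s ≤ D / δ := by rw [le_div_iff₀ hδ]; exact hs
  calc s + u ≤ (1 + |c| / L) * s + C / L := by linarith
    _ ≤ (1 + |c| / L) * (D / δ) + C / L := by gcongr

section Partition

variable {S U : Finset ℕ} {K : ℕ}

theorem card_nsmul_add_card_nsmul_le_sub {M : Type*} [AddCommGroup M] [PartialOrder M]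
    [IsOrderedAddMonoid M] {f : ℕ → M} {a b : M}
    (hSU : S ∪ U = range K) (hdisj : Disjoint S U)
    (ha : ∀ k ∈ S, a ≤ f (k + 1) - f k) (hb : ∀ k ∈ U, b ≤ f (k + 1) - f k) :
    #S • a + #U • b ≤ f K - f 0 := by
  rw [← sum_range_sub f K, ← hSU, sum_union hdisj]
  exact add_le_add (card_nsmul_le_sum _ _ _ ha) (card_nsmul_le_sum _ _ _ hb)

theorem card_mul_le_toReal_sub_of_le_sub {φ : ℕ → EReal} {lo δ : ℝ}
    (hSU : S ∪ U = range K) (hdisj : Disjoint S U) (hlow : ∀ k ≤ K, (lo : EReal) ≤ φ k)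
    (h0 : φ 0 < ⊤) (hmono : ∀ k < K, φ (k + 1) ≤ φ k)
    (hS : ∀ k ∈ S, (δ : EReal) ≤ φ k - φ (k + 1)) :
    #S * δ ≤ (φ 0).toReal - lo := by
  have hlt : ∀ k ∈ S ∪ U, k < K := fun k hk => mem_range.mp (hSU ▸ hk)
  have hfin : ∀ k ≤ K, φ k ≠ ⊤ ∧ φ k ≠ ⊥ := fun k hk =>
    ⟨((apply_le_apply_zero_of_forall_succ_le hmono k hk).trans_lt h0).ne,
      ((EReal.bot_lt_coe lo).trans_le (hlow k hk)).ne'⟩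
  have hsteps := card_nsmul_add_card_nsmul_le_sub (f := fun k => -(φ k).toReal)
    (a := δ) (b := 0) hSU hdisj
    (fun k hk => by
      have hkK := hlt k (mem_union_left U hk)
      have := EReal.le_toReal_sub_toReal (hS k hk) (hfin k hkK.le).1
        (hfin k hkK.le).2 (hfin (k + 1) hkK).1 (hfin (k + 1) hkK).2
      linarith)
    (fun k hk => by
      have hkK := hlt k (mem_union_right S hk)
      have := EReal.toReal_le_toReal (hmono k hkK) (hfin (k + 1) hkK).2 (hfin k hkK.le).1
      linarith)
  have hlowK : lo ≤ (φ K).toReal := by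
    simpa using EReal.toReal_le_toReal (hlow K le_rfl) (EReal.coe_ne_bot lo) (hfin K le_rfl).1
  simp only [nsmul_eq_mul, smul_zero, add_zero] at hsteps
  linarith

theorem card_mul_log_add_card_mul_log_le_log_div {σ : ℕ → ℝ} {σmax γ₁ γ₃ : ℝ}
    (hSU : S ∪ U = range K) (hdisj : Disjoint S U) (hpos : ∀ k ≤ K, 0 < σ k)
    (hmax : σ K ≤ σmax) (hγ₁ : 0 < γ₁) (hγ₃ : 0 < γ₃)
    (hS : ∀ k ∈ S, γ₃ * σ k ≤ σ (k + 1)) (hU : ∀ k ∈ U, γ₁ * σ k ≤ σ (k + 1)) :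
    #S * Real.log γ₃ + #U * Real.log γ₁ ≤ Real.log (σmax / σ 0) := by
  have hlt : ∀ k ∈ S ∪ U, k < K := fun k hk => mem_range.mp (hSU ▸ hk)
  have hsteps := card_nsmul_add_card_nsmul_le_sub (f := fun k => Real.log (σ k)) hSU hdisj
    (fun k hk => Real.log_le_log_sub_log_of_mul_le hγ₃
      (hpos k (hlt k (mem_union_left U hk)).le) (hS k hk))
    (fun k hk => Real.log_le_log_sub_log_of_mul_le hγ₁
      (hpos k (hlt k (mem_union_right S hk)).le) (hU k hk))
  have hσK := hpos K le_rfl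
  rw [Real.log_div (hσK.trans_le hmax).ne' (hpos 0 K.zero_le).ne']
  simp only [nsmul_eq_mul] at hsteps
  linarith [Real.log_le_log hσK hmax]

end Partition

/-- Theorem 4.6: worst-case iteration complexity bound K = O(ε⁻²). -/
theorem total_iteration_complexity {n : ℕ}
    (Φ : EuclideanSpace ℝ (Fin n) → EReal) (Φlow : ℝ)
    (hlow : ∀ y, (Φlow : EReal) ≤ Φ y)
    (K : ℕ) (x : ℕ → EuclideanSpace ℝ (Fin n))
    (h0 : Φ (x 0) < ⊤)
    (hmono : ∀ k < K, Φ (x (k + 1)) ≤ Φ (x k))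
    (σ : ℕ → ℝ) (σmax : ℝ)
    (hpos : ∀ k ≤ K, 0 < σ k) (hmax : ∀ k ≤ K, σ k ≤ σmax)
    (η₁ κmdc ε : ℝ)
    (hη₁ : η₁ ∈ Set.Ioo (0 : ℝ) 1) (hκ : κmdc ∈ Set.Ioo (0 : ℝ) 1)
    (hε : ε ∈ Set.Ioo (0 : ℝ) 1)
    (γ₁ γ₃ : ℝ) (hγ₁ : 1 < γ₁) (hγ₃ : γ₃ ∈ Set.Ioc (0 : ℝ) 1)
    (S U : Finset ℕ) (hSU : S ∪ U = Finset.range K) (hdisj : Disjoint S U)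
    (hS : ∀ k ∈ S,
      ((η₁ * κmdc * ε ^ 2 : ℝ) : EReal) ≤ Φ (x k) - Φ (x (k + 1)) ∧
      γ₃ * σ k ≤ σ (k + 1))
    (hU : ∀ k ∈ U, γ₁ * σ k ≤ σ (k + 1)) :
    K = S.card + U.card ∧
    (K : ℝ) ≤ (1 + |Real.log γ₃| / Real.log γ₁)
        * (((Φ (x 0)).toReal - Φlow) / (η₁ * κmdc * ε ^ 2))
      + Real.log (σmax / σ 0) / Real.log γ₁ := by
  have hδ : 0 < η₁ * κmdc * ε ^ 2 := mul_pos (mul_pos hη₁.1 hκ.1) (pow_pos hε.1 2)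
  have hcard : K = #S + #U := by rw [← card_range K, ← hSU, card_union_of_disjoint hdisj]
  have hdecrease := card_mul_le_toReal_sub_of_le_sub (φ := fun k => Φ (x k)) hSU hdisj
    (fun k _ => hlow (x k)) h0 hmono fun k hk => (hS k hk).1
  have hgrowth := card_mul_log_add_card_mul_log_le_log_div hSU hdisj hpos (hmax K le_rfl)
    (zero_lt_one.trans hγ₁) hγ₃.1 (fun k hk => (hS k hk).2) hU
  refine ⟨hcard, ?_⟩
  rw [hcard, Nat.cast_add]
  exact add_le_one_add_abs_div_mul_div_add_div (Nat.cast_nonneg _) hδ (Real.log_pos hγ₁)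
    hdecrease hgrowth
end

section
/- Let h : ℝ → ℝ ∪ {+∞} be proper, convex, and lower semicontinuous, let ν > 0 and q ∈ ℝ, and let a ≤ b. Then F(v) := (1/(2ν))(v − q)² + h(v) has a unique global minimizer v* over ℝ, and the clipped point min(max(v*, a), b) is a global minimizer of F over the interval [a, b]. -/
/-!
On its effective domain `{v | F v ≠ ⊤}` the objective `F v = (v - q)² / (2ν) + h v` is a real
function that is strongly convex with modulus `1 / ν`. By lower semicontinuity `F` is bounded
below on a unit ball around a point `v₀` of the domain, and strong convexity then forces
`F v ≥ F v₀` once `v` is far from `v₀`, so `F` attains its minimum on a compact ball; strict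
convexity makes the minimiser `v*` unique. For `v ∈ [a, b]` the clipped point lies on the segment
from `v*` to `v`, where the convex `F` is bounded by the larger endpoint value, `F v`.
-/

open Filter Set Metric

lemma EReal.le_of_toReal_le {x y : EReal} (hx : x ≠ ⊤) (hy : y ≠ ⊥) (h : x.toReal ≤ y.toReal) :
    x ≤ y := by
  induction x <;> induction y <;> simp_all

theorem LowerSemicontinuous.exists_forall_le' {α β : Type*} [TopologicalSpace α] [LinearOrder β]
    {f : α → β} (hf : LowerSemicontinuous f) (x₀ : α) (h : ∀ᶠ x in cocompact α, f x₀ ≤ f x) :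
    ∃ x, ∀ y, f x ≤ f y := by
  obtain ⟨K, hK, hKf⟩ := hasBasis_cocompact.eventually_iff.1 h
  obtain ⟨x, -, hx⟩ := (hf.lowerSemicontinuousOn _).exists_isMinOn (insert_nonempty x₀ K)
    (hK.insert x₀)
  refine ⟨x, fun y => ?_⟩
  by_cases hyK : y ∈ K
  · exact hx (mem_insert_of_mem _ hyK)
  · exact (hx (mem_insert _ _)).trans (hKf hyK)

lemma convexOn_toReal_of_ereal {f : ℝ → EReal} (hbot : ∀ x, f x ≠ ⊥)
    (hf : ∀ a b t : ℝ, 0 ≤ t → t ≤ 1 →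
      f (t * a + (1 - t) * b) ≤ (t : EReal) * f a + ((1 - t : ℝ) : EReal) * f b) :
    ConvexOn ℝ {x | f x ≠ ⊤} fun x => (f x).toReal := by
  have key : ∀ ⦃x⦄, f x ≠ ⊤ → ∀ ⦃y⦄, f y ≠ ⊤ → ∀ ⦃a b : ℝ⦄, 0 ≤ a → 0 ≤ b → a + b = 1 →
      f (a • x + b • y) ≤ ((a • (f x).toReal + b • (f y).toReal : ℝ) : EReal) := by
    intro x hx y hy a b ha hb hab
    obtain rfl : b = 1 - a := by linarith
    have := hf x y a ha (by linarith)
    rwa [← EReal.coe_toReal hx (hbot x), ← EReal.coe_toReal hy (hbot y), ← EReal.coe_mul,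
      ← EReal.coe_mul, ← EReal.coe_add] at this
  refine ⟨fun x hx y hy a b ha hb hab =>
    ne_top_of_le_ne_top (EReal.coe_ne_top _) (key hx hy ha hb hab),
    fun x hx y hy a b ha hb hab => ?_⟩
  have := EReal.toReal_le_toReal (key hx hy ha hb hab) (hbot _) (EReal.coe_ne_top _)
  rwa [EReal.toReal_coe] at this

section NormedSpace

variable {E : Type*} [NormedAddCommGroup E] [NormedSpace ℝ E]

lemma UniformConvexOn.congr {s : Set E} {φ : ℝ → ℝ} {f g : E → ℝ} (hf : UniformConvexOn s φ f)
    (hfg : EqOn f g s) : UniformConvexOn s φ g :=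
  ⟨hf.1, fun x hx y hy a b ha hb hab => by
    simpa only [← hfg hx, ← hfg hy, ← hfg (hf.1 hx hy ha hb hab)] using hf.2 hx hy ha hb hab⟩

lemma StrongConvexOn.toReal_coe_add {f : E → ℝ} {g : E → EReal} {m : ℝ}
    (hbot : ∀ x, g x ≠ ⊥) (hg : ConvexOn ℝ {x | g x ≠ ⊤} fun x => (g x).toReal)
    (hf : StrongConvexOn {x | g x ≠ ⊤} m f) :
    StrongConvexOn {x | (f x : EReal) + g x ≠ ⊤} m fun x => ((f x : EReal) + g x).toReal := by
  have hdom : {x | (f x : EReal) + g x ≠ ⊤} = {x | g x ≠ ⊤} := by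
    ext x
    exact EReal.add_ne_top_iff_ne_top_right (EReal.coe_ne_bot _) (EReal.coe_ne_top _)
  rw [hdom]
  have := hf.add hg.uniformConvexOn_zero
  rw [add_zero] at this
  refine this.congr fun x hx => ?_
  simp only [Pi.add_apply]
  rw [EReal.toReal_add (EReal.coe_ne_top _) (EReal.coe_ne_bot _) hx (hbot x), EReal.toReal_coe]

lemma StrongConvexOn.le_of_le_dist {s : Set E} {m b : ℝ} {f : E → ℝ} {x₀ x : E}
    (hf : StrongConvexOn s m f) (hm : 0 < m) (hx₀ : x₀ ∈ s)
    (hb : ∀ y ∈ s, dist y x₀ ≤ 1 → b ≤ f y) (hx : x ∈ s)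
    (hd : 1 + 2 * (f x₀ - b) / m ≤ dist x x₀) : f x₀ ≤ f x := by
  set d := dist x x₀
  have hbx₀ : b ≤ f x₀ := hb x₀ hx₀ (by simp)
  have hgap : 2 * (f x₀ - b) ≤ (d - 1) * m := (div_le_iff₀ hm).1 (by linarith)
  have hd₁ : 1 ≤ d := by nlinarith
  have hd₀ : 0 < d := by linarith
  have ht₀ : 0 ≤ d⁻¹ := inv_nonneg.2 hd₀.le
  have ht₁ : 0 ≤ 1 - d⁻¹ := sub_nonneg.2 (inv_le_one_of_one_le₀ hd₁)
  -- Strong convexity at the point `w` of `[x₀, x]` at distance `1` from `x₀` gives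
  -- `f x - f x₀ ≥ d * (m / 2 * (d - 1) - (f x₀ - b))`, which `hgap` makes nonnegative.
  set w := d⁻¹ • x + (1 - d⁻¹) • x₀
  have hw : dist w x₀ = 1 := by
    have : w - x₀ = d⁻¹ • (x - x₀) := by simp only [w, sub_smul, one_smul, smul_sub]; abel
    rw [dist_eq_norm, this, norm_smul, ← dist_eq_norm, Real.norm_eq_abs, abs_of_nonneg ht₀,
      inv_mul_cancel₀ hd₀.ne']
  have hbw : b ≤ f w := hb w (hf.1 hx hx₀ ht₀ ht₁ (add_sub_cancel _ _)) hw.le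
  have hconv := hf.2 hx hx₀ ht₀ ht₁ (add_sub_cancel _ _)
  rw [← dist_eq_norm] at hconv
  simp only [smul_eq_mul] at hconv
  have hscaled : d * b ≤ f x + (d - 1) * f x₀ - (d - 1) * (m / 2 * d) :=
    calc d * b ≤ d * (d⁻¹ * f x + (1 - d⁻¹) * f x₀ - d⁻¹ * (1 - d⁻¹) * (m / 2 * d ^ 2)) :=
          mul_le_mul_of_nonneg_left (hbw.trans hconv) hd₀.le
      _ = f x + (d - 1) * f x₀ - (d - 1) * (m / 2 * d) := by field_simp
  linarith [mul_le_mul_of_nonneg_left hgap hd₀.le]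

lemma exists_forall_le_of_strongConvexOn_toReal [ProperSpace E] {F : E → EReal} {m : ℝ}
    (hF : LowerSemicontinuous F) (hbot : ∀ x, F x ≠ ⊥) {x₀ : E} (hx₀ : F x₀ ≠ ⊤)
    (hconv : StrongConvexOn {x | F x ≠ ⊤} m fun x => (F x).toReal) (hm : 0 < m) :
    ∃ x, ∀ y, F x ≤ F y := by
  obtain ⟨z, -, hz⟩ := (hF.lowerSemicontinuousOn _).exists_isMinOn
    ⟨x₀, mem_closedBall_self zero_le_one⟩ (isCompact_closedBall x₀ 1)
  refine hF.exists_forall_le' x₀ ?_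
  filter_upwards [(tendsto_dist_right_cocompact_atTop x₀).eventually_ge_atTop
    (1 + 2 * ((F x₀).toReal - (F z).toReal) / m)] with x hx
  by_cases hxtop : F x = ⊤
  · exact hxtop ▸ le_top
  refine EReal.le_of_toReal_le hx₀ (hbot x) (hconv.le_of_le_dist hm hx₀ ?_ hxtop hx)
  exact fun y hy hyx₀ => EReal.toReal_le_toReal (hz (mem_closedBall.2 hyx₀)) (hbot z) hy

lemma eq_of_forall_le_of_strictConvexOn_toReal {F : E → EReal} (hbot : ∀ x, F x ≠ ⊥)
    (hconv : StrictConvexOn ℝ {x | F x ≠ ⊤} fun x => (F x).toReal) {x₀ x y : E}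
    (hx₀ : F x₀ ≠ ⊤) (hx : ∀ z, F x ≤ F z) (hy : ∀ z, F y ≤ F z) : x = y := by
  have hmin : ∀ {x}, (∀ z, F x ≤ F z) → IsMinOn (fun x => (F x).toReal) {x | F x ≠ ⊤} x :=
    fun hx z hz => EReal.toReal_le_toReal (hx z) (hbot _) hz
  exact hconv.eq_of_isMinOn (hmin hx) (hmin hy) (ne_top_of_le_ne_top hx₀ (hx x₀))
    (ne_top_of_le_ne_top hx₀ (hy x₀))

lemma le_of_mem_segment_of_forall_le {F : E → EReal} (hbot : ∀ x, F x ≠ ⊥)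
    (hconv : ConvexOn ℝ {x | F x ≠ ⊤} fun x => (F x).toReal) {x y z : E}
    (hx : ∀ w, F x ≤ F w) (hz : z ∈ segment ℝ x y) : F z ≤ F y := by
  by_cases hy : F y = ⊤
  · exact hy ▸ le_top
  have hxy : F x ≤ F y := hx y
  have hx' : F x ≠ ⊤ := ne_top_of_le_ne_top hy hxy
  refine EReal.le_of_toReal_le (hconv.1.segment_subset hx' hy hz) (hbot y) ?_
  exact (hconv.le_on_segment hx' hy hz).trans
    (max_le (EReal.toReal_le_toReal hxy (hbot x) hy) le_rfl)

end NormedSpace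

lemma strongConvexOn_mul_sub_sq {s : Set ℝ} (hs : Convex ℝ s) (c q : ℝ) :
    StrongConvexOn s (2 * c) fun x => c * (x - q) ^ 2 := by
  refine ⟨hs, fun x _ y _ a b _ _ hab => le_of_eq ?_⟩
  obtain rfl : b = 1 - a := by linarith
  simp only [smul_eq_mul, Real.norm_eq_abs, sq_abs]
  ring

lemma min_max_mem_segment {a b x v : ℝ} (hv : v ∈ Icc a b) : min (max x a) b ∈ segment ℝ x v := by
  rw [segment_eq_uIcc, mem_uIcc]
  obtain ⟨hav, hvb⟩ := hv
  rcases le_total x v with hxv | hvx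
  · exact Or.inl ⟨le_min (le_max_left _ _) (hxv.trans hvb), min_le_of_left_le (max_le hxv hav)⟩
  · exact Or.inr ⟨le_min (le_max_of_le_left hvx) hvb,
      min_le_of_left_le (max_le le_rfl (hav.trans hvx))⟩

theorem clipped_prox_solves_constrained_general (h : ℝ → EReal)
    (hproper : ∃ v, h v ≠ ⊤) (hnobot : ∀ v, h v ≠ ⊥)
    (hlsc : LowerSemicontinuous h)
    (hconv : ∀ a b t : ℝ, 0 ≤ t → t ≤ 1 →
      h (t * a + (1 - t) * b) ≤ (t : EReal) * h a + ((1 - t : ℝ) : EReal) * h b)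
    (ν q : ℝ) (hν : 0 < ν) (a b : ℝ) :
    ∃ vstar : ℝ,
      (∀ v, (((1 / (2 * ν)) * (vstar - q) ^ 2 : ℝ) : EReal) + h vstar
          ≤ (((1 / (2 * ν)) * (v - q) ^ 2 : ℝ) : EReal) + h v) ∧
      (∀ u, (∀ v, (((1 / (2 * ν)) * (u - q) ^ 2 : ℝ) : EReal) + h u
          ≤ (((1 / (2 * ν)) * (v - q) ^ 2 : ℝ) : EReal) + h v) → u = vstar) ∧
      (∀ v ∈ Set.Icc a b,
        (((1 / (2 * ν)) * (min (max vstar a) b - q) ^ 2 : ℝ) : EReal)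
            + h (min (max vstar a) b)
          ≤ (((1 / (2 * ν)) * (v - q) ^ 2 : ℝ) : EReal) + h v) := by
  set F : ℝ → EReal := fun v => (((1 / (2 * ν)) * (v - q) ^ 2 : ℝ) : EReal) + h v
  obtain ⟨v₀, hv₀⟩ := hproper
  have hFbot : ∀ v, F v ≠ ⊥ := fun v => EReal.add_ne_bot_iff.2 ⟨EReal.coe_ne_bot _, hnobot v⟩
  have hFv₀ : F v₀ ≠ ⊤ := EReal.add_ne_top (EReal.coe_ne_top _) hv₀
  have hm : 0 < 2 * (1 / (2 * ν)) := by positivity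
  have hhconv := convexOn_toReal_of_ereal hnobot hconv
  have hF : StrongConvexOn {v | F v ≠ ⊤} (2 * (1 / (2 * ν))) fun v => (F v).toReal :=
    .toReal_coe_add hnobot hhconv (strongConvexOn_mul_sub_sq hhconv.1 _ q)
  have hFlsc : LowerSemicontinuous F :=
    (continuous_coe_real_ereal.comp (by fun_prop)).lowerSemicontinuous.add' hlsc
      fun v => EReal.continuousAt_add (.inl (EReal.coe_ne_top _)) (.inl (EReal.coe_ne_bot _))
  obtain ⟨vstar, hmin⟩ := exists_forall_le_of_strongConvexOn_toReal hFlsc hFbot hFv₀ hF hm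
  exact ⟨vstar, hmin,
    fun u hu => eq_of_forall_le_of_strictConvexOn_toReal hFbot (hF.strictConvexOn hm) hFv₀ hu hmin,
    fun v hv => le_of_mem_segment_of_forall_le hFbot (hF.convexOn fun r => by positivity) hmin
      (min_max_mem_segment hv)⟩

/-- The interval-constrained proximal problem for convex h is solved by clipping
the unconstrained proximal point onto the interval. -/
theorem clipped_prox_solves_constrained (h : ℝ → EReal)
    (hproper : ∃ v, h v ≠ ⊤) (hnobot : ∀ v, h v ≠ ⊥)
    (hlsc : LowerSemicontinuous h)
    (hconv : ∀ a b t : ℝ, 0 ≤ t → t ≤ 1 →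
      h (t * a + (1 - t) * b) ≤ (t : EReal) * h a + ((1 - t : ℝ) : EReal) * h b)
    (ν q : ℝ) (hν : 0 < ν) (a b : ℝ) (hab : a ≤ b) :
    ∃ vstar : ℝ,
      (∀ v, (((1 / (2 * ν)) * (vstar - q) ^ 2 : ℝ) : EReal) + h vstar
          ≤ (((1 / (2 * ν)) * (v - q) ^ 2 : ℝ) : EReal) + h v) ∧
      (∀ u, (∀ v, (((1 / (2 * ν)) * (u - q) ^ 2 : ℝ) : EReal) + h u
          ≤ (((1 / (2 * ν)) * (v - q) ^ 2 : ℝ) : EReal) + h v) → u = vstar) ∧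
      (∀ v ∈ Set.Icc a b,
        (((1 / (2 * ν)) * (min (max vstar a) b - q) ^ 2 : ℝ) : EReal)
            + h (min (max vstar a) b)
          ≤ (((1 / (2 * ν)) * (v - q) ^ 2 : ℝ) : EReal) + h v) :=
  clipped_prox_solves_constrained_general h hproper hnobot hlsc hconv ν q hν a b
end

section
/- Suppose ‖x‖ > Δ. Then for every ζ with νλ < ζ < νλ + ‖x‖ − Δ, one has g(ζ) < 0. -/
/-! The projection `p` lies in the ball of radius `Δ`, so `‖x + p‖ ≥ ‖x‖ - Δ > ζ - νλ`; the factor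
`ζ / (ζ - νλ)` then scales this lower bound up past `ζ`. -/

lemma norm_sub_le_norm_add_of_norm_le {E : Type*} [SeminormedAddCommGroup E] {x p : E} {Δ : ℝ}
    (hp : ‖p‖ ≤ Δ) : ‖x‖ - Δ ≤ ‖x + p‖ := by
  have := norm_sub_norm_le x (-p)
  rw [norm_neg, sub_neg_eq_add] at this
  linarith

lemma lt_norm_div_smul_of_lt_norm {E : Type*} [SeminormedAddCommGroup E] [NormedSpace ℝ E]
    {t d : ℝ} {y : E} (ht : 0 < t) (hd : 0 < d) (hy : d < ‖y‖) : t < ‖(t / d) • y‖ := by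
  have hc : 0 < t / d := div_pos ht hd
  calc t = t / d * d := (div_mul_cancel₀ t hd.ne').symm
    _ < t / d * ‖y‖ := mul_lt_mul_of_pos_left hy hc
    _ = ‖(t / d) • y‖ := by rw [norm_smul, Real.norm_of_nonneg hc.le]

theorem g_neg_for_small_zeta_general {H : Type*}
    [NormedAddCommGroup H] [InnerProductSpace ℝ H]
    (ν lam Δ : ℝ) (hν : 0 < ν) (hlam : 0 < lam)
    (x qbar : H)
    (projC : H → H)
    (hmem : ∀ u, projC u ∈ Metric.closedBall (0 : H) Δ)
    (w : ℝ → H) (g : ℝ → ℝ)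
    (hw : ∀ ζ, w ζ = (ζ / (ζ - ν * lam)) • (x + projC (((ζ - ν * lam) / ζ) • qbar - x)))
    (hg : ∀ ζ, g ζ = ζ - ‖w ζ‖) :
    ∀ ζ, ν * lam < ζ → ζ < ν * lam + ‖x‖ - Δ → g ζ < 0 := by
  intro ζ hlow hhigh
  have hζ : 0 < ζ := (mul_pos hν hlam).trans hlow
  have hp : ‖projC (((ζ - ν * lam) / ζ) • qbar - x)‖ ≤ Δ := mem_closedBall_zero_iff.mp (hmem _)
  have hgap : ζ - ν * lam < ‖x + projC (((ζ - ν * lam) / ζ) • qbar - x)‖ :=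
    (by linarith : ζ - ν * lam < ‖x‖ - Δ).trans_le (norm_sub_le_norm_add_of_norm_le hp)
  have key := lt_norm_div_smul_of_lt_norm hζ (sub_pos.mpr hlow) hgap
  rw [hg, hw]
  linarith

/-- If ‖x‖ > Δ, then g(ζ) < 0 for νλ < ζ < νλ + ‖x‖ − Δ. -/
theorem g_neg_for_small_zeta {H : Type*}
    [NormedAddCommGroup H] [InnerProductSpace ℝ H] [FiniteDimensional ℝ H]
    (ν lam Δ : ℝ) (hν : 0 < ν) (hlam : 0 < lam) (hΔ : 0 < Δ)
    (x qbar : H) (hx : Δ < ‖x‖)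
    (projC : H → H)
    (hmem : ∀ u, projC u ∈ Metric.closedBall (0 : H) Δ)
    (hnear : ∀ u, ∀ v ∈ Metric.closedBall (0 : H) Δ, ‖u - projC u‖ ≤ ‖u - v‖)
    (w : ℝ → H) (g : ℝ → ℝ)
    (hw : ∀ ζ, w ζ = (ζ / (ζ - ν * lam)) • (x + projC (((ζ - ν * lam) / ζ) • qbar - x)))
    (hg : ∀ ζ, g ζ = ζ - ‖w ζ‖) :
    ∀ ζ, ν * lam < ζ → ζ < ν * lam + ‖x‖ - Δ → g ζ < 0 :=
  g_neg_for_small_zeta_general ν lam Δ hν hlam x qbar projC hmem w g hw hg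
end

section
/- Suppose either (i) ‖x‖ > Δ, or (ii) ‖x‖ < Δ and ‖q̄‖ > νλ. Then there exists ζ ∈ (νλ, +∞) such that g(ζ) = 0. -/
/-!
The nearest-point map onto a convex set is 1-Lipschitz, so `g` is continuous on `(νλ, ∞)` and it
suffices to find a sign change. For `ζ ≥ 2νλ` the factor `ζ / (ζ - νλ)` is at most `2`, so
`‖w ζ‖ ≤ 2 (‖x‖ + Δ)` and `g ζ > 0` for large `ζ`. Near `νλ`: if `‖x‖ > Δ`, then
`‖x + proj_C(·)‖ ≥ ‖x‖ - Δ > 0` while `ζ / (ζ - νλ)` blows up; if `‖x‖ < Δ`, then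
`((ζ - νλ)/ζ) q̄ - x` lies in `C` for `ζ` close to `νλ`, so `w ζ = q̄` and `g ζ = ζ - ‖q̄‖ < 0`.
-/

open Set Filter Topology
open scoped InnerProductSpace

section NearestPoint

theorem eq_self_of_isNearest {E : Type*} [NormedAddCommGroup E] {K : Set E} {P : E → E}
    (hP : ∀ u, ∀ v ∈ K, ‖u - P u‖ ≤ ‖u - v‖) {u : E} (hu : u ∈ K) : P u = u :=
  (sub_eq_zero.1 (norm_le_zero_iff.1 (by simpa using hP u u hu))).symm

variable {H : Type*} [NormedAddCommGroup H] [InnerProductSpace ℝ H] {K : Set H} {P : H → H}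

theorem real_inner_sub_le_zero_of_isNearest (hK : Convex ℝ K) (hPK : ∀ u, P u ∈ K)
    (hP : ∀ u, ∀ v ∈ K, ‖u - P u‖ ≤ ‖u - v‖) (u : H) {v : H} (hv : v ∈ K) :
    ⟪u - P u, v - P u⟫_ℝ ≤ 0 := by
  have : Nonempty K := ⟨⟨v, hv⟩⟩
  refine (norm_eq_iInf_iff_real_inner_le_zero hK (hPK u)).1 ?_ v hv
  exact le_antisymm (le_ciInf fun w => hP u w w.2)
    (ciInf_le ⟨0, by rintro _ ⟨w, rfl⟩; exact norm_nonneg _⟩ (⟨P u, hPK u⟩ : K))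

theorem lipschitzWith_one_of_isNearest (hK : Convex ℝ K) (hPK : ∀ u, P u ∈ K)
    (hP : ∀ u, ∀ v ∈ K, ‖u - P u‖ ≤ ‖u - v‖) : LipschitzWith 1 P := by
  refine LipschitzWith.of_dist_le_mul fun u v => ?_
  rw [NNReal.coe_one, one_mul, dist_eq_norm, dist_eq_norm]
  have hu := real_inner_sub_le_zero_of_isNearest hK hPK hP u (hPK v)
  have hv := real_inner_sub_le_zero_of_isNearest hK hPK hP v (hPK u)
  -- adding the two variational inequalities gives `‖P u - P v‖² ≤ ⟪u - v, P u - P v⟫`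
  have key : ‖P u - P v‖ ^ 2 ≤ ‖u - v‖ * ‖P u - P v‖ := by
    calc ‖P u - P v‖ ^ 2 ≤ ⟪u - v, P u - P v⟫_ℝ := by
          rw [← real_inner_self_eq_norm_sq]
          have : P v - P u = -(P u - P v) := (neg_sub _ _).symm
          rw [this, inner_neg_right] at hu
          simp only [inner_sub_left, inner_sub_right, real_inner_comm] at hu hv ⊢
          linarith
      _ ≤ ‖u - v‖ * ‖P u - P v‖ := real_inner_le_norm _ _
  nlinarith [norm_nonneg (P u - P v), norm_nonneg (u - v)]

end NearestPoint

namespace TrustRegionProx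

variable {H : Type*} [NormedAddCommGroup H] [InnerProductSpace ℝ H]

-- `c` stands for `νλ` and `P` for the projection onto the trust region.
noncomputable def w (P : H → H) (c : ℝ) (x q : H) (ζ : ℝ) : H :=
  (ζ / (ζ - c)) • (x + P (((ζ - c) / ζ) • q - x))

noncomputable def g (P : H → H) (c : ℝ) (x q : H) (ζ : ℝ) : ℝ :=
  ζ - ‖w P c x q ζ‖

variable {P : H → H} {c Δ : ℝ} {x q : H}

theorem continuousOn_g (hc : 0 ≤ c) (hP : Continuous P) : ContinuousOn (g P c x q) (Ioi c) := by
  intro ζ (hζ : c < ζ)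
  have hζc : ζ - c ≠ 0 := sub_ne_zero.2 hζ.ne'
  have hζ0 : ζ ≠ 0 := (hc.trans_lt hζ).ne'
  refine ContinuousAt.continuousWithinAt ?_
  unfold g w
  fun_prop (disch := assumption)

theorem exists_g_pos (hc : 0 < c) (hPΔ : ∀ u, ‖P u‖ ≤ Δ) : ∃ b, c < b ∧ 0 < g P c x q b := by
  have hΔ : 0 ≤ Δ := (norm_nonneg _).trans (hPΔ 0)
  set b := 2 * (c + ‖x‖ + Δ)
  have hcb : c < b := by linarith [norm_nonneg x]
  refine ⟨b, hcb, ?_⟩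
  have hfactor : b / (b - c) ≤ 2 := by
    rw [div_le_iff₀ (by linarith)]
    linarith [norm_nonneg x]
  have hbound : ‖x + P (((b - c) / b) • q - x)‖ ≤ ‖x‖ + Δ :=
    (norm_add_le _ _).trans (by linarith [hPΔ (((b - c) / b) • q - x)])
  have hw : ‖w P c x q b‖ < b := by
    rw [w, norm_smul, Real.norm_of_nonneg (div_nonneg (by linarith) (by linarith))]
    calc b / (b - c) * ‖x + P (((b - c) / b) • q - x)‖ ≤ 2 * (‖x‖ + Δ) :=
          mul_le_mul hfactor hbound (norm_nonneg _) zero_le_two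
      _ < b := by linarith
  exact sub_pos.2 hw

theorem exists_g_neg_of_lt_norm (hc : 0 ≤ c) (hPΔ : ∀ u, ‖P u‖ ≤ Δ) (hx : Δ < ‖x‖) :
    ∃ a, c < a ∧ g P c x q a < 0 := by
  set a := c + (‖x‖ - Δ) / 2
  have hac : a - c = (‖x‖ - Δ) / 2 := by ring
  refine ⟨a, by linarith, sub_neg.2 ?_⟩
  have hlower : ‖x‖ - Δ ≤ ‖x + P (((a - c) / a) • q - x)‖ := by
    linarith [norm_sub_le_norm_add x (P (((a - c) / a) • q - x)), hPΔ (((a - c) / a) • q - x)]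
  rw [w, norm_smul, Real.norm_of_nonneg (div_nonneg (by linarith) (by linarith))]
  calc a < a / (a - c) * (‖x‖ - Δ) := by
        rw [hac, div_mul_eq_mul_div, lt_div_iff₀ (by linarith)]
        nlinarith
    _ ≤ a / (a - c) * ‖x + P (((a - c) / a) • q - x)‖ :=
        mul_le_mul_of_nonneg_left hlower (div_nonneg (by linarith) (by linarith))

theorem exists_g_neg_of_norm_lt (hc : 0 < c) (hfix : ∀ u, ‖u‖ ≤ Δ → P u = u) (hx : ‖x‖ < Δ)
    (hq : c < ‖q‖) : ∃ a, c < a ∧ g P c x q a < 0 := by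
  have hlim : Tendsto (fun ζ => ‖((ζ - c) / ζ) • q - x‖) (𝓝 c) (𝓝 ‖x‖) := by
    have : ContinuousAt (fun ζ => ‖((ζ - c) / ζ) • q - x‖) c := by
      have := hc.ne'
      fun_prop (disch := assumption)
    simpa using this.tendsto
  have hev : ∀ᶠ ζ in 𝓝[>] c, c < ζ ∧ ‖((ζ - c) / ζ) • q - x‖ < Δ ∧ ζ < ‖q‖ :=
    eventually_mem_nhdsWithin.and
      (nhdsWithin_le_nhds ((hlim.eventually_lt_const hx).and (eventually_lt_nhds hq)))
  obtain ⟨a, hca, hball, haq⟩ := hev.exists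
  refine ⟨a, hca, ?_⟩
  have hwq : w P c x q a = q := by
    rw [w, hfix _ hball.le, add_sub_cancel, smul_smul, div_mul_div_cancel₀ (sub_ne_zero.2 hca.ne'),
      div_self (hc.trans hca).ne', one_smul]
  rw [g, hwq]
  linarith

theorem exists_g_eq_zero (hc : 0 < c) (hP : Continuous P) (hPΔ : ∀ u, ‖P u‖ ≤ Δ)
    (hfix : ∀ u, ‖u‖ ≤ Δ → P u = u) (hcase : Δ < ‖x‖ ∨ (‖x‖ < Δ ∧ c < ‖q‖)) :
    ∃ ζ, c < ζ ∧ g P c x q ζ = 0 := by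
  obtain ⟨a, hca, hga⟩ : ∃ a, c < a ∧ g P c x q a < 0 := by
    rcases hcase with hx | ⟨hx, hq⟩
    · exact exists_g_neg_of_lt_norm hc.le hPΔ hx
    · exact exists_g_neg_of_norm_lt hc hfix hx hq
  obtain ⟨b, hcb, hgb⟩ := exists_g_pos (x := x) (q := q) hc hPΔ
  obtain ⟨ζ, hζ, hgζ⟩ := isPreconnected_Ioi.intermediate_value hca hcb (continuousOn_g hc.le hP)
    ⟨hga.le, hgb.le⟩
  exact ⟨ζ, hζ, hgζ⟩

end TrustRegionProx

theorem g_has_root_general {H : Type*}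
    [NormedAddCommGroup H] [InnerProductSpace ℝ H]
    (ν lam Δ : ℝ) (hν : 0 < ν) (hlam : 0 < lam)
    (x qbar : H)
    (hcase : Δ < ‖x‖ ∨ (‖x‖ < Δ ∧ ν * lam < ‖qbar‖))
    (projC : H → H)
    (hmem : ∀ u, projC u ∈ Metric.closedBall (0 : H) Δ)
    (hnear : ∀ u, ∀ v ∈ Metric.closedBall (0 : H) Δ, ‖u - projC u‖ ≤ ‖u - v‖)
    (w : ℝ → H) (g : ℝ → ℝ)
    (hw : ∀ ζ, w ζ = (ζ / (ζ - ν * lam)) • (x + projC (((ζ - ν * lam) / ζ) • qbar - x)))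
    (hg : ∀ ζ, g ζ = ζ - ‖w ζ‖) :
    ∃ ζ : ℝ, ν * lam < ζ ∧ g ζ = 0 := by
  have hgeq : g = TrustRegionProx.g projC (ν * lam) x qbar :=
    funext fun ζ => by rw [hg, hw]; rfl
  have hPΔ : ∀ u, ‖projC u‖ ≤ Δ := fun u => mem_closedBall_zero_iff.1 (hmem u)
  have hfix : ∀ u, ‖u‖ ≤ Δ → projC u = u := fun u hu =>
    eq_self_of_isNearest hnear (mem_closedBall_zero_iff.2 hu)
  have hP : Continuous projC :=
    (lipschitzWith_one_of_isNearest (convex_closedBall 0 Δ) hmem hnear).continuous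
  rw [hgeq]
  exact TrustRegionProx.exists_g_eq_zero (mul_pos hν hlam) hP hPΔ hfix hcase

/-- Existence of a root of g in (νλ, ∞) when ‖x‖ > Δ, or when ‖x‖ < Δ and ‖q̄‖ > νλ. -/
theorem g_has_root {H : Type*}
    [NormedAddCommGroup H] [InnerProductSpace ℝ H] [FiniteDimensional ℝ H]
    (ν lam Δ : ℝ) (hν : 0 < ν) (hlam : 0 < lam) (hΔ : 0 < Δ)
    (x qbar : H)
    (hcase : Δ < ‖x‖ ∨ (‖x‖ < Δ ∧ ν * lam < ‖qbar‖))
    (projC : H → H)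
    (hmem : ∀ u, projC u ∈ Metric.closedBall (0 : H) Δ)
    (hnear : ∀ u, ∀ v ∈ Metric.closedBall (0 : H) Δ, ‖u - projC u‖ ≤ ‖u - v‖)
    (w : ℝ → H) (g : ℝ → ℝ)
    (hw : ∀ ζ, w ζ = (ζ / (ζ - ν * lam)) • (x + projC (((ζ - ν * lam) / ζ) • qbar - x)))
    (hg : ∀ ζ, g ζ = ζ - ‖w ζ‖) :
    ∃ ζ : ℝ, ν * lam < ζ ∧ g ζ = 0 :=
  g_has_root_general ν lam Δ hν hlam x qbar hcase projC hmem hnear w g hw hg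
end
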